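/- Let f be differentiable on (a, +∞) with f(a) < 0, lim_{ξ→+∞} f(ξ) > 0, f'(ξ) > 0 for all ξ ∈ (a, +∞), and assume either f' is monotone on (a, +∞) or there exists ξ_in ∈ (a, +∞) such that f' is monotonically decreasing on (a, ξ_in] and monotonically increasing on [ξ_in, +∞). Then f has a unique root ξ* in (a, +∞), and for any initial value ξ₀ ∈ (a, ξ*], the Newton iteration sequence {ξ_n} remains in (a, +∞) and converges to ξ*. -/

import Mathlib

/-! Since `f' > 0`, `f` is strictly increasing and has a unique root `r`. The shape of `f'`
makes it quasiconvex on `(a, ∞)`, and either antitone on `(a, r]` or monotone on `[r, ∞)`.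
In the first case `f` is concave left of `r`, so a Newton step maps `(a, r]` into itself and
moves right; in the second `f` is convex right of `r`, so a step maps `[r, ∞)` into itself and
moves left, while a step from `(a, r]` still moves right. Either way the iterates are eventually
monotone and bounded, and their limit `L` is a root: quasiconvexity bounds `f'` along the
iterates, so `f (x n) = (x n - x (n + 1)) * f' (x n) → 0`. -/

open Set Filter Topology

noncomputable def newtonMap (f f' : ℝ → ℝ) (y : ℝ) : ℝ := y - f y / f' y

section Quasiconvex

variable {𝕜 β : Type*} [Field 𝕜] [LinearOrder 𝕜] [IsStrictOrderedRing 𝕜]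
  [LinearOrder β] {s : Set 𝕜} {g : 𝕜 → β}

theorem QuasiconvexOn.le_max_of_mem_Icc (hg : QuasiconvexOn 𝕜 s g) {u v y : 𝕜} (hu : u ∈ s)
    (hv : v ∈ s) (hy : y ∈ Icc u v) : g y ≤ max (g u) (g v) :=
  ((hg _).ordConnected.out ⟨hu, le_max_left _ _⟩ ⟨hv, le_max_right _ _⟩ hy).2

theorem quasiconvexOn_of_forall_antitoneOn_or_monotoneOn (hs : Convex 𝕜 s)
    (hg : ∀ c ∈ s, AntitoneOn g (s ∩ Iic c) ∨ MonotoneOn g (s ∩ Ici c)) :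
    QuasiconvexOn 𝕜 s g := by
  refine fun m ↦ convex_iff_ordConnected.2 ⟨fun u hu v hv y hy ↦ ?_⟩
  have hys : y ∈ s := hs.ordConnected.out hu.1 hv.1 hy
  refine ⟨hys, ?_⟩
  rcases hg y hys with hanti | hmono
  · exact (hanti ⟨hu.1, hy.1⟩ ⟨hys, le_rfl⟩ hy.1).trans hu.2
  · exact (hmono ⟨hys, le_rfl⟩ ⟨hv.1, hy.2⟩ hy.2).trans hv.2

end Quasiconvex

theorem antitoneOn_Ioc_or_monotoneOn_Ici {α β : Type*} [LinearOrder α] [Preorder β]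
    {g : α → β} {a c : α}
    (hg : (MonotoneOn g (Ioi a) ∨ AntitoneOn g (Ioi a)) ∨
      ∃ b, AntitoneOn g (Ioc a b) ∧ MonotoneOn g (Ici b))
    (hc : a < c) : AntitoneOn g (Ioc a c) ∨ MonotoneOn g (Ici c) := by
  rcases hg with (hmono | hanti) | ⟨b, hanti, hmono⟩
  · exact .inr (hmono.mono (Ici_subset_Ioi.2 hc))
  · exact .inl (hanti.mono Ioc_subset_Ioi_self)
  · exact (le_total c b).imp (fun h ↦ hanti.mono (Ioc_subset_Ioc_right h))
      fun h ↦ hmono.mono (Ici_subset_Ici.2 h)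

theorem Set.MapsTo.forall_mem_of_succ_eq {α : Type*} {g : α → α} {s : Set α} {x : ℕ → α}
    (hg : MapsTo g s s) (hrec : ∀ n, x (n + 1) = g (x n)) (h₀ : x 0 ∈ s) : ∀ n, x n ∈ s
  | 0 => h₀
  | n + 1 => hrec n ▸ hg (hg.forall_mem_of_succ_eq hrec h₀ n)

variable {f f' : ℝ → ℝ} {a r : ℝ} {x : ℕ → ℝ}

theorem strictMonoOn_of_hasDerivAt_pos {D : Set ℝ} (hD : Convex ℝ D)
    (hderiv : ∀ ξ ∈ D, HasDerivAt f (f' ξ) ξ) (hpos : ∀ ξ ∈ D, 0 < f' ξ) :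
    StrictMonoOn f D :=
  strictMonoOn_of_hasDerivWithinAt_pos hD
    (fun ξ hξ ↦ (hderiv ξ hξ).continuousAt.continuousWithinAt)
    (fun ξ hξ ↦ (hderiv ξ (interior_subset hξ)).hasDerivWithinAt)
    fun ξ hξ ↦ hpos ξ (interior_subset hξ)

theorem exists_mem_Ioi_eq_zero (hcont : ContinuousWithinAt f (Ici a) a)
    (hcontIoi : ContinuousOn f (Ioi a)) (hfa : f a < 0) (hev : ∀ᶠ ξ in atTop, 0 < f ξ) :
    ∃ r, a < r ∧ f r = 0 := by
  obtain ⟨b, hab, hfb⟩ := ((eventually_gt_atTop a).and hev).exists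
  have hcontIcc : ContinuousOn f (Icc a b) := fun ξ hξ ↦ by
    rcases eq_or_lt_of_le hξ.1 with rfl | h
    · exact hcont.mono Icc_subset_Ici_self
    · exact (hcontIoi.continuousAt (Ioi_mem_nhds h)).continuousWithinAt
  obtain ⟨r, hr, hfr⟩ := intermediate_value_Ioo hab.le hcontIcc ⟨hfa, hfb⟩
  exact ⟨r, hr.1, hfr⟩

theorem sub_le_mul_sub_of_hasDerivAt_le {p q C : ℝ} (hpq : p ≤ q)
    (hderiv : ∀ z ∈ Icc p q, HasDerivAt f (f' z) z) (hle : ∀ z ∈ Icc p q, f' z ≤ C) :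
    f q - f p ≤ C * (q - p) := by
  have hint : interior (Icc p q) ⊆ Icc p q := interior_subset
  exact (convex_Icc p q).image_sub_le_mul_sub_of_deriv_le
    (fun z hz ↦ (hderiv z hz).continuousAt.continuousWithinAt)
    (fun z hz ↦ (hderiv z (hint hz)).differentiableAt.differentiableWithinAt)
    (fun z hz ↦ (hderiv z (hint hz)).deriv ▸ hle z (hint hz))
    p (left_mem_Icc.2 hpq) q (right_mem_Icc.2 hpq) hpq

theorem le_newtonMap {y : ℝ} (hfy : f y ≤ 0) (hf'y : 0 < f' y) : y ≤ newtonMap f f' y :=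
  le_sub_self_iff _ |>.2 (div_nonpos_of_nonpos_of_nonneg hfy hf'y.le)

theorem newtonMap_le {y : ℝ} (hfy : 0 ≤ f y) (hf'y : 0 < f' y) : newtonMap f f' y ≤ y :=
  sub_le_self _ (div_nonneg hfy hf'y.le)

theorem le_newtonMap_of_le_root (hpos : ∀ ξ ∈ Ioi a, 0 < f' ξ) (hf : StrictMonoOn f (Ioi a))
    (hr : f r = 0) {y : ℝ} (hay : a < y) (hyr : y ≤ r) : y ≤ newtonMap f f' y :=
  le_newtonMap (hr ▸ hf.monotoneOn hay (hay.trans_le hyr) hyr) (hpos y hay)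

theorem newtonMap_le_of_antitoneOn {y : ℝ} (hyr : y ≤ r) (hr : f r = 0)
    (hderiv : ∀ z ∈ Icc y r, HasDerivAt f (f' z) z) (hanti : AntitoneOn f' (Icc y r))
    (hf'y : 0 < f' y) : newtonMap f f' y ≤ r := by
  have hslope : f r - f y ≤ f' y * (r - y) := sub_le_mul_sub_of_hasDerivAt_le hyr hderiv
    fun z hz ↦ hanti (left_mem_Icc.2 hyr) hz hz.1
  rw [newtonMap, sub_le_comm, le_div_iff₀ hf'y]
  linarith

theorem le_newtonMap_of_monotoneOn {y : ℝ} (hry : r ≤ y) (hr : f r = 0)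
    (hderiv : ∀ z ∈ Icc r y, HasDerivAt f (f' z) z) (hmono : MonotoneOn f' (Icc r y))
    (hf'y : 0 < f' y) : r ≤ newtonMap f f' y := by
  have hslope : f y - f r ≤ f' y * (y - r) := sub_le_mul_sub_of_hasDerivAt_le hry hderiv
    fun z hz ↦ hmono hz (right_mem_Icc.2 hry) hz.2
  rw [newtonMap, le_sub_comm, div_le_iff₀ hf'y]
  linarith

theorem eq_zero_of_tendsto_newton {L C : ℝ} (hx : Tendsto x atTop (𝓝 L))
    (hfL : ContinuousAt f L) (hrec : ∀ n, x (n + 1) = newtonMap f f' (x n))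
    (hne : ∀ n, f' (x n) ≠ 0) (hbdd : ∀ n, |f' (x n)| ≤ C) : f L = 0 := by
  have hstep : Tendsto (fun n ↦ x n - x (n + 1)) atTop (𝓝 0) := by
    simpa using hx.sub (hx.comp (tendsto_add_atTop_nat 1))
  have hfx : ∀ n, f (x n) = (x n - x (n + 1)) * f' (x n) := fun n ↦ by
    rw [hrec n, newtonMap, sub_sub_cancel, div_mul_cancel₀ _ (hne n)]
  have hzero : Tendsto (fun n ↦ f (x n)) atTop (𝓝 0) := by
    refine squeeze_zero_norm (fun n ↦ ?_) (by simpa using hstep.abs.mul_const C)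
    rw [hfx n, Real.norm_eq_abs, abs_mul]
    exact mul_le_mul_of_nonneg_left (hbdd n) (abs_nonneg _)
  exact tendsto_nhds_unique (hfL.tendsto.comp hx) hzero

theorem newton_limit_eq_root (hderiv : ∀ ξ ∈ Ioi a, HasDerivAt f (f' ξ) ξ)
    (hpos : ∀ ξ ∈ Ioi a, 0 < f' ξ) (hquasi : QuasiconvexOn ℝ (Ioi a) f')
    (hf : StrictMonoOn f (Ioi a)) (har : a < r) (hr : f r = 0) {u v L : ℝ} (hau : a < u)
    (hmem : ∀ n, x n ∈ Icc u v) (hrec : ∀ n, x (n + 1) = newtonMap f f' (x n))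
    (hx : Tendsto x atTop (𝓝 L)) : L = r := by
  have hLmem : L ∈ Icc u v := isClosed_Icc.mem_of_tendsto hx (Eventually.of_forall hmem)
  have hax : ∀ n, a < x n := fun n ↦ hau.trans_le (hmem n).1
  have hbdd : ∀ n, |f' (x n)| ≤ max (f' u) (f' v) := fun n ↦ by
    rw [abs_of_pos (hpos _ (hax n))]
    exact hquasi.le_max_of_mem_Icc hau (hau.trans_le ((hmem n).1.trans (hmem n).2)) (hmem n)
  have haL : a < L := hau.trans_le hLmem.1
  have hfL : f L = 0 := eq_zero_of_tendsto_newton hx (hderiv L haL).continuousAt hrec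
    (fun n ↦ (hpos _ (hax n)).ne') hbdd
  exact hf.injOn haL har (hfL.trans hr.symm)

theorem newton_tendsto_of_mem_Ioc (hderiv : ∀ ξ ∈ Ioi a, HasDerivAt f (f' ξ) ξ)
    (hpos : ∀ ξ ∈ Ioi a, 0 < f' ξ) (hquasi : QuasiconvexOn ℝ (Ioi a) f')
    (hf : StrictMonoOn f (Ioi a)) (har : a < r) (hr : f r = 0) (hmem : ∀ n, x n ∈ Ioc a r)
    (hrec : ∀ n, x (n + 1) = newtonMap f f' (x n)) : Tendsto x atTop (𝓝 r) := by
  have hmono : Monotone x := monotone_nat_of_le_succ fun n ↦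
    hrec n ▸ le_newtonMap_of_le_root hpos hf hr (hmem n).1 (hmem n).2
  have hlim := tendsto_atTop_ciSup hmono ⟨r, forall_mem_range.2 fun n ↦ (hmem n).2⟩
  exact newton_limit_eq_root hderiv hpos hquasi hf har hr (hmem 0).1
    (fun n ↦ ⟨hmono (Nat.zero_le n), (hmem n).2⟩) hrec hlim ▸ hlim

theorem newton_tendsto_of_mem_Ici (hderiv : ∀ ξ ∈ Ioi a, HasDerivAt f (f' ξ) ξ)
    (hpos : ∀ ξ ∈ Ioi a, 0 < f' ξ) (hquasi : QuasiconvexOn ℝ (Ioi a) f')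
    (hf : StrictMonoOn f (Ioi a)) (har : a < r) (hr : f r = 0) (hmem : ∀ n, x n ∈ Ici r)
    (hrec : ∀ n, x (n + 1) = newtonMap f f' (x n)) : Tendsto x atTop (𝓝 r) := by
  have hanti : Antitone x := antitone_nat_of_succ_le fun n ↦ by
    have hax : a < x n := har.trans_le (hmem n)
    exact hrec n ▸ newtonMap_le (hr ▸ hf.monotoneOn har hax (hmem n)) (hpos _ hax)
  have hlim := tendsto_atTop_ciInf hanti ⟨r, forall_mem_range.2 hmem⟩
  exact newton_limit_eq_root hderiv hpos hquasi hf har hr har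
    (fun n ↦ ⟨hmem n, hanti (Nat.zero_le n)⟩) hrec hlim ▸ hlim

theorem mapsTo_newtonMap_Ioc (hderiv : ∀ ξ ∈ Ioi a, HasDerivAt f (f' ξ) ξ)
    (hpos : ∀ ξ ∈ Ioi a, 0 < f' ξ) (hf : StrictMonoOn f (Ioi a)) (hr : f r = 0)
    (hanti : AntitoneOn f' (Ioc a r)) : MapsTo (newtonMap f f') (Ioc a r) (Ioc a r) :=
  fun y hy ↦ by
    have hsub : Icc y r ⊆ Ioc a r := fun z hz ↦ ⟨hy.1.trans_le hz.1, hz.2⟩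
    exact ⟨hy.1.trans_le (le_newtonMap_of_le_root hpos hf hr hy.1 hy.2),
      newtonMap_le_of_antitoneOn hy.2 hr (fun z hz ↦ hderiv z (hsub hz).1) (hanti.mono hsub)
        (hpos y hy.1)⟩

theorem mapsTo_newtonMap_Ici (hderiv : ∀ ξ ∈ Ioi a, HasDerivAt f (f' ξ) ξ)
    (hpos : ∀ ξ ∈ Ioi a, 0 < f' ξ) (har : a < r) (hr : f r = 0)
    (hmono : MonotoneOn f' (Ici r)) : MapsTo (newtonMap f f') (Ici r) (Ici r) :=
  fun y hy ↦ le_newtonMap_of_monotoneOn hy hr (fun z hz ↦ hderiv z (har.trans_le hz.1))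
    (hmono.mono Icc_subset_Ici_self) (hpos y (har.trans_le hy))

theorem mapsTo_newtonMap_Ioi (hderiv : ∀ ξ ∈ Ioi a, HasDerivAt f (f' ξ) ξ)
    (hpos : ∀ ξ ∈ Ioi a, 0 < f' ξ) (hf : StrictMonoOn f (Ioi a)) (har : a < r) (hr : f r = 0)
    (hmono : MonotoneOn f' (Ici r)) : MapsTo (newtonMap f f') (Ioi a) (Ioi a) := fun y hy ↦ by
  rcases le_total y r with hyr | hry
  · exact hy.trans_le (le_newtonMap_of_le_root hpos hf hr hy hyr)
  · exact har.trans_le (mapsTo_newtonMap_Ici hderiv hpos har hr hmono hry)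

theorem newton_tendsto_of_monotoneOn_Ici (hderiv : ∀ ξ ∈ Ioi a, HasDerivAt f (f' ξ) ξ)
    (hpos : ∀ ξ ∈ Ioi a, 0 < f' ξ) (hquasi : QuasiconvexOn ℝ (Ioi a) f')
    (hf : StrictMonoOn f (Ioi a)) (har : a < r) (hr : f r = 0)
    (hmono : MonotoneOn f' (Ici r)) (hax : ∀ n, a < x n)
    (hrec : ∀ n, x (n + 1) = newtonMap f f' (x n)) : Tendsto x atTop (𝓝 r) := by
  by_cases hle : ∀ n, x n ≤ r
  · exact newton_tendsto_of_mem_Ioc hderiv hpos hquasi hf har hr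
      (fun n ↦ ⟨hax n, hle n⟩) hrec
  obtain ⟨N, hN⟩ := not_forall.1 hle
  have hrec' : ∀ n, x (n + 1 + N) = newtonMap f f' (x (n + N)) := fun n ↦ by
    rw [add_right_comm]; exact hrec _
  have hmem := (mapsTo_newtonMap_Ici hderiv hpos har hr hmono).forall_mem_of_succ_eq
    (x := fun n ↦ x (n + N)) hrec' (by simpa using (not_le.1 hN).le)
  exact (tendsto_add_atTop_iff_nat N).1
    (newton_tendsto_of_mem_Ici hderiv hpos hquasi hf har hr hmem hrec')

/-- General Newton convergence: `f` differentiable with positive derivative on `(a, ∞)`,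
`f a < 0` (continuously from the right), positive limit at `+∞`, and `f'` either monotone
on `(a, ∞)` or decreasing on `(a, ξ_in]` then increasing on `[ξ_in, ∞)` for some inflection
point `ξ_in`.  Then `f` has a unique root `ξ*` in `(a, ∞)`, and for any initial value
`ξ₀ ∈ (a, ξ*]` the Newton sequence stays in `(a, ∞)` and converges to `ξ*`. -/
theorem newton_general_converges
    (f f' : ℝ → ℝ) (a : ℝ)
    (hderiv : ∀ ξ ∈ Set.Ioi a, HasDerivAt f (f' ξ) ξ)
    (hpos : ∀ ξ ∈ Set.Ioi a, 0 < f' ξ)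
    (hcont : ContinuousWithinAt f (Set.Ici a) a)
    (hfa : f a < 0)
    (hlim : Filter.Tendsto f Filter.atTop Filter.atTop ∨
      ∃ M : ℝ, 0 < M ∧ Filter.Tendsto f Filter.atTop (nhds M))
    (hstruct : (MonotoneOn f' (Set.Ioi a) ∨ AntitoneOn f' (Set.Ioi a)) ∨
      ∃ ξin, a < ξin ∧ AntitoneOn f' (Set.Ioc a ξin) ∧ MonotoneOn f' (Set.Ici ξin)) :
    ∃ ξs, a < ξs ∧ f ξs = 0 ∧ (∀ y, a < y → f y = 0 → y = ξs) ∧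
      ∀ (ξ₀ : ℝ) (x : ℕ → ℝ), a < ξ₀ → ξ₀ ≤ ξs → x 0 = ξ₀ →
        (∀ n, x (n + 1) = x n - f (x n) / f' (x n)) →
        (∀ n, a < x n) ∧ Filter.Tendsto x Filter.atTop (nhds ξs) := by
  have hf : StrictMonoOn f (Ioi a) :=
    strictMonoOn_of_hasDerivAt_pos (convex_Ioi a) hderiv hpos
  obtain ⟨r, har, hr⟩ := exists_mem_Ioi_eq_zero hcont
    (fun ξ hξ ↦ (hderiv ξ hξ).continuousAt.continuousWithinAt) hfa
    (hlim.elim (·.eventually_gt_atTop 0) fun ⟨_, hM, h⟩ ↦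
      h.eventually (eventually_gt_nhds hM))
  refine ⟨r, har, hr, fun y hy hfy ↦ hf.injOn hy har (hfy.trans hr.symm),
    fun ξ₀ x h₀ h₀r hx₀ hrec ↦ ?_⟩
  have hsplit : ∀ c ∈ Ioi a, AntitoneOn f' (Ioc a c) ∨ MonotoneOn f' (Ici c) := fun c hc ↦
    antitoneOn_Ioc_or_monotoneOn_Ici (hstruct.imp_right fun ⟨b, _, h⟩ ↦ ⟨b, h⟩) hc
  have hquasi : QuasiconvexOn ℝ (Ioi a) f' := quasiconvexOn_of_forall_antitoneOn_or_monotoneOn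
    (convex_Ioi a) fun c hc ↦ (hsplit c hc).imp id (·.mono inter_subset_right)
  have hx0 : x 0 ∈ Ioc a r := hx₀ ▸ ⟨h₀, h₀r⟩
  rcases hsplit r har with hanti | hmono
  · have hmem := (mapsTo_newtonMap_Ioc hderiv hpos hf hr hanti).forall_mem_of_succ_eq hrec hx0
    exact ⟨fun n ↦ (hmem n).1,
      newton_tendsto_of_mem_Ioc hderiv hpos hquasi hf har hr hmem hrec⟩
  have hax := (mapsTo_newtonMap_Ioi hderiv hpos hf har hr hmono).forall_mem_of_succ_eq
    hrec hx0.1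
  exact ⟨hax, newton_tendsto_of_monotoneOn_Ici hderiv hpos hquasi hf har hr hmono hax hrec⟩
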